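/- For every n ≥ 0, the total number of partial zigzag knight's paths of length n (ending at any height in ℕ) equals the central binomial-type number binom(n+1, ⌊(n+1)/2⌋). -/

import Mathlib

/-!
The zigzag condition forces a partial path to go up at its odd-numbered steps and down at its
even-numbered ones (the first step must go up to stay in ℕ²). So a path of length `m + 1` is a path
of length `m` followed by one of the two steps `(2,1), (1,2)`, resp. `(2,-1), (1,-2)`, and only the
height has to be checked. Counting paths by final height, this recursion is solved by ballot numbers,
`N(2k, h) = C(2k+1, k+h+1) - C(2k+1, k+h+2)` and `N(2k+1, h+1) = C(2k+2, k+h+1) - C(2k+2, k+h+2)`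
(with `N(2k+1, 0) = 0`), as Pascal's rule shows, using `C(2k+1, k) = C(2k+1, k+1)` at the boundary.
Summing over all heights telescopes to `C(2k+1, k+1)`, resp. `C(2k+2, k+1)`.
-/

open List

/-- The four right-moves of a knight. -/
def KnightSteps : Set (ℤ × ℤ) := {(2,1), (2,-1), (1,2), (1,-2)}

/-- All partial sums of the y-coordinates are nonnegative (the path stays in ℕ²). -/
def NonnegHeights (p : List (ℤ × ℤ)) : Prop :=
  ∀ i, 0 ≤ ((p.take i).map Prod.snd).sum

/-- A partial knight's path: steps from `KnightSteps`, never going below the x-axis. -/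
def IsPartialKnight (p : List (ℤ × ℤ)) : Prop :=
  (∀ s ∈ p, s ∈ KnightSteps) ∧ NonnegHeights p

/-- Any two consecutive steps have vertical components of opposite sign. -/
def IsZigzag (p : List (ℤ × ℤ)) : Prop :=
  List.Chain' (fun a b => a.2 * b.2 < 0) p

/-- A partial zigzag knight's path. -/
def IsPartialZigzag (p : List (ℤ × ℤ)) : Prop :=
  IsPartialKnight p ∧ IsZigzag p

/-- The height of the endpoint of a path. -/
def pathHeight (p : List (ℤ × ℤ)) : ℤ := (p.map Prod.snd).sum

/-- The size (x-coordinate of the endpoint) of a path. -/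
def pathSize (p : List (ℤ × ℤ)) : ℤ := (p.map Prod.fst).sum

/-- A zigzag knight's path ending on the x-axis. -/
def IsZigzagKnightPath (p : List (ℤ × ℤ)) : Prop :=
  IsPartialZigzag p ∧ pathHeight p = 0

/-- The last step of `p` exists and is an up-step. -/
def EndsWithUp (p : List (ℤ × ℤ)) : Prop :=
  ∃ s, p.getLast? = some s ∧ 0 < s.2

/-- The last step of `p` exists and is a down-step. -/
def EndsWithDown (p : List (ℤ × ℤ)) : Prop :=
  ∃ s, p.getLast? = some s ∧ s.2 < 0

def Estep : ℤ × ℤ := (2, 1)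
def Ebar  : ℤ × ℤ := (2, -1)
def Nstep : ℤ × ℤ := (1, 2)
def Nbar  : ℤ × ℤ := (1, -2)

lemma snd_ne_zero_of_mem_knightSteps {s : ℤ × ℤ} (hs : s ∈ KnightSteps) : s.2 ≠ 0 := by
  rcases hs with rfl | rfl | rfl | rfl <;> decide

lemma snd_le_two_of_mem_knightSteps {s : ℤ × ℤ} (hs : s ∈ KnightSteps) : s.2 ≤ 2 := by
  rcases hs with rfl | rfl | rfl | rfl <;> decide

lemma pathHeight_append_singleton (q : List (ℤ × ℤ)) (s : ℤ × ℤ) :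
    pathHeight (q ++ [s]) = pathHeight q + s.2 := by
  simp [pathHeight]

lemma nonnegHeights_iff_forall_prefix {p : List (ℤ × ℤ)} :
    NonnegHeights p ↔ ∀ r, r <+: p → 0 ≤ pathHeight r := by
  refine ⟨fun hp r hr => ?_, fun hp i => hp _ (take_prefix i p)⟩
  rw [prefix_iff_eq_take.1 hr]
  exact hp _

lemma NonnegHeights.pathHeight_nonneg {p : List (ℤ × ℤ)} (hp : NonnegHeights p) :
    0 ≤ pathHeight p :=
  nonnegHeights_iff_forall_prefix.1 hp p (prefix_refl p)

lemma nonnegHeights_append_singleton_iff {q : List (ℤ × ℤ)} {s : ℤ × ℤ} :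
    NonnegHeights (q ++ [s]) ↔ NonnegHeights q ∧ 0 ≤ pathHeight q + s.2 := by
  simp only [nonnegHeights_iff_forall_prefix, prefix_concat_iff, or_imp, forall_and,
    forall_eq, pathHeight_append_singleton]
  exact and_comm

lemma IsPartialKnight.pathHeight_le {p : List (ℤ × ℤ)} (hp : IsPartialKnight p) :
    pathHeight p ≤ 2 * p.length := by
  have := sum_le_card_nsmul (p.map Prod.snd) 2 <| forall_mem_map.2 fun s hs =>
    snd_le_two_of_mem_knightSteps (hp.1 s hs)
  rwa [length_map, nsmul_eq_mul, mul_comm] at this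

lemma isZigzag_iff {p : List (ℤ × ℤ)} :
    IsZigzag p ↔ List.IsChain (fun a b => a.2 * b.2 < 0) p :=
  Iff.rfl

lemma isPartialZigzag_nil : IsPartialZigzag [] :=
  ⟨⟨by simp, fun i => by simp⟩, List.isChain_nil⟩

lemma isPartialZigzag_append_singleton_iff' {q : List (ℤ × ℤ)} {s : ℤ × ℤ} :
    IsPartialZigzag (q ++ [s]) ↔ IsPartialZigzag q ∧ s ∈ KnightSteps ∧
      (∀ x ∈ q.getLast?, x.2 * s.2 < 0) ∧ 0 ≤ pathHeight q + s.2 := by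
  simp only [IsPartialZigzag, IsPartialKnight, isZigzag_iff, nonnegHeights_append_singleton_iff,
    List.isChain_append, mem_append, mem_singleton, or_imp, forall_and, forall_eq,
    List.isChain_singleton, head?_cons, Option.mem_some_iff, forall_eq', true_and]
  tauto

lemma IsPartialZigzag.pos_iff_odd_of_getLast {q : List (ℤ × ℤ)} (hq : IsPartialZigzag q)
    {x : ℤ × ℤ} (hx : x ∈ q.getLast?) : 0 < x.2 ↔ Odd q.length := by
  induction q using List.reverseRecOn generalizing x with
  | nil => simp at hx
  | append_singleton r y ih =>
    obtain ⟨hr, hy, hlink, hnn⟩ := isPartialZigzag_append_singleton_iff'.1 hq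
    obtain rfl : y = x := by simpa using hx
    have hx0 := snd_ne_zero_of_mem_knightSteps hy
    rw [length_append, length_singleton, Nat.odd_add_one]
    cases hz : r.getLast? with
    | none =>
      obtain rfl := getLast?_eq_none_iff.1 hz
      simp only [pathHeight, map_nil, sum_nil, zero_add] at hnn
      simp only [length_nil, Nat.not_odd_zero, not_false_eq_true, iff_true]
      omega
    | some z =>
      have hzx := hlink z hz
      have hz0 : z.2 ≠ 0 := by rintro h; simp [h] at hzx
      rw [← ih hr hz]
      rcases mul_neg_iff.1 hzx with h | h <;> omega

lemma isPartialZigzag_append_singleton_iff {q : List (ℤ × ℤ)} {s : ℤ × ℤ} :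
    IsPartialZigzag (q ++ [s]) ↔ IsPartialZigzag q ∧ s ∈ KnightSteps ∧
      (0 < s.2 ↔ Even q.length) ∧ 0 ≤ pathHeight q + s.2 := by
  rw [isPartialZigzag_append_singleton_iff']
  refine and_congr_right fun hq => and_congr_right fun hs => ?_
  have hs0 := snd_ne_zero_of_mem_knightSteps hs
  cases hx : q.getLast? with
  | none =>
    obtain rfl := getLast?_eq_none_iff.1 hx
    simp only [pathHeight, map_nil, sum_nil, zero_add, length_nil, Even.zero, iff_true]
    simp only [Option.mem_def, reduceCtorEq, false_imp_iff, implies_true, true_and]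
    omega
  | some x =>
    have hxs := hq.pos_iff_odd_of_getLast hx
    have hx0 := snd_ne_zero_of_mem_knightSteps (hq.1.1 x (mem_of_getLast? hx))
    simp only [Option.mem_def, Option.some.injEq, forall_eq', ← Nat.not_odd_iff_even, ← hxs,
      mul_neg_iff]
    omega

def zigzagSteps (m : ℕ) : Finset (ℤ × ℤ) :=
  if Even m then {Estep, Nstep} else {Ebar, Nbar}

lemma mem_zigzagSteps {m : ℕ} {s : ℤ × ℤ} :
    s ∈ zigzagSteps m ↔ s ∈ KnightSteps ∧ (0 < s.2 ↔ Even m) := by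
  unfold zigzagSteps KnightSteps Estep Nstep Ebar Nbar
  split_ifs with hm <;> simp [hm] <;> aesop

def zigzagPaths : ℕ → ℤ → Finset (List (ℤ × ℤ))
  | 0, h => if h = 0 then {[]} else ∅
  | m + 1, h =>
    if 0 ≤ h then (zigzagSteps m).biUnion fun s => (zigzagPaths m (h - s.2)).image (· ++ [s])
    else ∅

lemma mem_zigzagPaths {m : ℕ} {h : ℤ} {p : List (ℤ × ℤ)} :
    p ∈ zigzagPaths m h ↔ IsPartialZigzag p ∧ p.length = m ∧ pathHeight p = h := by
  induction m generalizing h p with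
  | zero =>
    rw [zigzagPaths, length_eq_zero_iff]
    split_ifs with hh
    · subst hh
      rw [Finset.mem_singleton]
      exact ⟨by rintro rfl; exact ⟨isPartialZigzag_nil, rfl, rfl⟩, fun hp => hp.2.1⟩
    · simp only [Finset.notMem_empty, false_iff]
      rintro ⟨-, rfl, rfl⟩
      exact hh rfl
  | succ m ih =>
    simp only [zigzagPaths]
    constructor
    · intro hp
      split_ifs at hp with hh
      · obtain ⟨s, hs, q, hq, rfl⟩ := by simpa only [Finset.mem_biUnion, Finset.mem_image] using hp
        obtain ⟨hqz, rfl, hqh⟩ := ih.1 hq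
        obtain ⟨hsK, hspar⟩ := mem_zigzagSteps.1 hs
        refine ⟨isPartialZigzag_append_singleton_iff.2 ⟨hqz, hsK, hspar, by omega⟩, by simp, ?_⟩
        rw [pathHeight_append_singleton, hqh, sub_add_cancel]
      · simp at hp
    · rintro ⟨hp, hlen, rfl⟩
      obtain ⟨q, s, rfl⟩ := (eq_nil_or_concat' p).resolve_left (by rintro rfl; simp at hlen)
      obtain ⟨hq, hs, hspar, -⟩ := isPartialZigzag_append_singleton_iff.1 hp
      have hqlen : q.length = m := by simpa using hlen
      rw [if_pos hp.1.2.pathHeight_nonneg, Finset.mem_biUnion]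
      refine ⟨s, mem_zigzagSteps.2 ⟨hs, hqlen ▸ hspar⟩, Finset.mem_image.2 ⟨q, ih.2 ⟨hq, hqlen, ?_⟩, rfl⟩⟩
      rw [pathHeight_append_singleton, add_sub_cancel_right]

lemma card_zigzagPaths_of_neg {m : ℕ} {h : ℤ} (hh : h < 0) : (zigzagPaths m h).card = 0 := by
  refine Finset.card_eq_zero.2 (Finset.eq_empty_of_forall_notMem fun p hp => ?_)
  obtain ⟨hpz, -, rfl⟩ := mem_zigzagPaths.1 hp
  exact hh.not_ge hpz.1.2.pathHeight_nonneg

lemma card_zigzagPaths_succ {m : ℕ} {h : ℤ} (hh : 0 ≤ h) :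
    (zigzagPaths (m + 1) h).card = ∑ s ∈ zigzagSteps m, (zigzagPaths m (h - s.2)).card := by
  rw [zigzagPaths, if_pos hh, Finset.card_biUnion]
  · exact Finset.sum_congr rfl fun s _ =>
      Finset.card_image_of_injective _ (append_left_injective [s])
  · intro s _ t _ hst
    simp only [Function.onFun, Finset.disjoint_left, Finset.mem_image]
    rintro _ ⟨q, -, rfl⟩ ⟨r, -, he⟩
    exact hst (by simpa using (append_inj' he rfl).2.symm)

lemma card_zigzagPaths_succ_of_even {m : ℕ} (hm : Even m) {h : ℤ} (hh : 0 ≤ h) :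
    (zigzagPaths (m + 1) h).card = (zigzagPaths m (h - 1)).card + (zigzagPaths m (h - 2)).card := by
  rw [card_zigzagPaths_succ hh, zigzagSteps, if_pos hm, Finset.sum_pair (by decide)]
  rfl

lemma card_zigzagPaths_succ_of_odd {m : ℕ} (hm : ¬Even m) {h : ℤ} (hh : 0 ≤ h) :
    (zigzagPaths (m + 1) h).card = (zigzagPaths m (h + 1)).card + (zigzagPaths m (h + 2)).card := by
  rw [card_zigzagPaths_succ hh, zigzagSteps, if_neg hm, Finset.sum_pair (by decide)]
  simp [Ebar, Nbar]

lemma card_zigzagPaths_odd_add_choose_of_even {k : ℕ}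
    (heven : ∀ t : ℕ, (zigzagPaths (2 * k) t).card + (2 * k + 1).choose (k + t + 2)
      = (2 * k + 1).choose (k + t + 1)) (t : ℕ) :
    (zigzagPaths (2 * k + 1) (t + 1)).card + (2 * k + 2).choose (k + t + 2)
      = (2 * k + 2).choose (k + t + 1) := by
  have hrec := card_zigzagPaths_succ_of_even (even_two_mul k) (h := (t : ℤ) + 1) (by positivity)
  have hpascal := Nat.choose_succ_succ' (2 * k + 1) (k + t + 1)
  have hpascal' := Nat.choose_succ_succ' (2 * k + 1) (k + t)
  cases t with
  | zero =>
    rw [Nat.cast_zero, zero_add, sub_self, show (1 : ℤ) - 2 = -1 by norm_num,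
      card_zigzagPaths_of_neg (show (-1 : ℤ) < 0 by norm_num)] at hrec
    have := heven 0
    have := Nat.choose_symm_half k
    clear heven
    push_cast at *
    ring_nf at *
    omega
  | succ s =>
    have := heven s
    have := heven (s + 1)
    clear heven
    push_cast at *
    ring_nf at *
    omega

lemma card_zigzagPaths_even_succ_add_choose_of_odd {k : ℕ}
    (hodd : ∀ t : ℕ, (zigzagPaths (2 * k + 1) (t + 1)).card + (2 * k + 2).choose (k + t + 2)
      = (2 * k + 2).choose (k + t + 1)) (t : ℕ) :
    (zigzagPaths (2 * (k + 1)) t).card + (2 * (k + 1) + 1).choose (k + 1 + t + 2)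
      = (2 * (k + 1) + 1).choose (k + 1 + t + 1) := by
  have hrec := card_zigzagPaths_succ_of_odd (m := 2 * k + 1) (by simp) (h := t) (by positivity)
  have hpascal := Nat.choose_succ_succ' (2 * k + 2) (k + t + 2)
  have hpascal' := Nat.choose_succ_succ' (2 * k + 2) (k + t + 1)
  have := hodd t
  have := hodd (t + 1)
  clear hodd
  push_cast at *
  ring_nf at *
  omega

lemma card_zigzagPaths_even_add_choose (k t : ℕ) :
    (zigzagPaths (2 * k) t).card + (2 * k + 1).choose (k + t + 2)
      = (2 * k + 1).choose (k + t + 1) := by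
  induction k generalizing t with
  | zero =>
    cases t with
    | zero => simp [zigzagPaths]
    | succ t => simp [zigzagPaths, Nat.choose_eq_zero_of_lt]; omega
  | succ k ih =>
    exact card_zigzagPaths_even_succ_add_choose_of_odd
      (card_zigzagPaths_odd_add_choose_of_even ih) t

lemma card_zigzagPaths_odd_add_choose (k t : ℕ) :
    (zigzagPaths (2 * k + 1) (t + 1)).card + (2 * k + 2).choose (k + t + 2)
      = (2 * k + 2).choose (k + t + 1) :=
  card_zigzagPaths_odd_add_choose_of_even (card_zigzagPaths_even_add_choose k) t

lemma card_zigzagPaths_odd_zero (k : ℕ) : (zigzagPaths (2 * k + 1) 0).card = 0 := by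
  rw [card_zigzagPaths_succ_of_even (even_two_mul k) le_rfl,
    card_zigzagPaths_of_neg (by norm_num), card_zigzagPaths_of_neg (by norm_num)]

lemma Finset.sum_range_add_eq_of_add_eq {M : Type*} [AddCommMonoid M] {a f : ℕ → M}
    (h : ∀ t, a t + f (t + 1) = f t) (B : ℕ) : ∑ t ∈ range B, a t + f B = f 0 := by
  induction B with
  | zero => simp
  | succ B ih => rw [Finset.sum_range_succ, add_assoc, h, ih]

lemma sum_card_zigzagPaths (n : ℕ) :
    ∑ t ∈ Finset.range (2 * n + 1), (zigzagPaths n t).card = (n + 1).choose ((n + 1) / 2) := by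
  obtain ⟨k, rfl | rfl⟩ := Nat.even_or_odd' n
  · have := Finset.sum_range_add_eq_of_add_eq (f := fun t => (2 * k + 1).choose (k + t + 1))
      (card_zigzagPaths_even_add_choose k) (2 * (2 * k) + 1)
    rw [Nat.choose_eq_zero_of_lt (by omega), add_zero] at this
    rw [this, show (2 * k + 1) / 2 = k by omega]
    exact Nat.choose_symm_half k
  · have := Finset.sum_range_add_eq_of_add_eq (f := fun t => (2 * k + 2).choose (k + t + 1))
      (card_zigzagPaths_odd_add_choose k) (2 * (2 * k + 1))
    rw [Nat.choose_eq_zero_of_lt (by omega), add_zero] at this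
    rw [Finset.sum_range_succ', Nat.cast_zero, card_zigzagPaths_odd_zero, add_zero]
    simp only [Nat.cast_succ]
    rw [this, show (2 * k + 1 + 1) / 2 = k + 1 by omega]

-- Paths of length `n` end at heights in `[0, 2n]`.
def partialZigzagPaths (n : ℕ) : Finset (List (ℤ × ℤ)) :=
  (Finset.range (2 * n + 1)).biUnion fun t => zigzagPaths n t

lemma mem_partialZigzagPaths {n : ℕ} {p : List (ℤ × ℤ)} :
    p ∈ partialZigzagPaths n ↔ IsPartialZigzag p ∧ p.length = n := by
  simp only [partialZigzagPaths, Finset.mem_biUnion, Finset.mem_range, mem_zigzagPaths]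
  refine ⟨fun ⟨_, _, hp, hn, _⟩ => ⟨hp, hn⟩, fun ⟨hp, hn⟩ => ?_⟩
  have h0 := hp.1.2.pathHeight_nonneg
  have h2n := hp.1.pathHeight_le
  exact ⟨(pathHeight p).toNat, by omega, hp, hn, by omega⟩

lemma card_partialZigzagPaths (n : ℕ) :
    (partialZigzagPaths n).card = ∑ t ∈ Finset.range (2 * n + 1), (zigzagPaths n t).card := by
  refine Finset.card_biUnion fun t _ u _ htu => Finset.disjoint_left.2 fun p hpt hpu => htu ?_
  exact_mod_cast (mem_zigzagPaths.1 hpt).2.2.symm.trans (mem_zigzagPaths.1 hpu).2.2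

/-- the total number of partial zigzag knight's paths of length n
is binom(n+1, ⌊(n+1)/2⌋). -/
theorem stmt2 (n : ℕ) :
    Nat.card {p : List (ℤ × ℤ) // IsPartialZigzag p ∧ p.length = n}
      = Nat.choose (n + 1) ((n + 1) / 2) := by
  rw [← sum_card_zigzagPaths, ← card_partialZigzagPaths, ← Nat.card_eq_finsetCard]
  exact Nat.card_congr (Equiv.subtypeEquivRight fun p => mem_partialZigzagPaths.symm)
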